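/- Let M be a symmetric matrix over GF(2) of block form [[1,𝟏,𝟎],[𝟏,A,B],[𝟎,Bᵀ,C]] (first diagonal entry 1, first index adjacent to exactly the indices of the second block). Let M' = [[Ā,B],[Bᵀ,C]] be obtained by deleting the first row and column and toggling every entry of A. Then ν(M) = ν(M') over GF(2). -/

import Mathlib

/-!
Write `M = [[1, uᵀ], [u, D]]` with `u = (𝟏, 𝟎)`. Complementing `A` adds `𝟏𝟏ᵀ` to the `α` block of
`D`, so `M' = D + u uᵀ = D - u · 1⁻¹ · uᵀ` (we are in characteristic 2) is the Schur complement of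
the pivot `1` in `M`. The LDU factorisation through the Schur complement gives
`rank M = 1 + rank M'`, and `M` has exactly one more row than `M'`.
-/

/-- The GF(2)-nullity of a square matrix: the dimension of its kernel,
computed by rank–nullity. -/
noncomputable def nullity {n : Type} [Fintype n] (M : Matrix n n (ZMod 2)) : ℕ :=
  Fintype.card n - M.rank

open Matrix Module

theorem Submodule.finrank_prod {K V W : Type*} [Field K] [AddCommGroup V] [Module K V]
    [AddCommGroup W] [Module K W] [FiniteDimensional K V] [FiniteDimensional K W]
    (p : Submodule K V) (q : Submodule K W) :
    finrank K (p.prod q) = finrank K p + finrank K q := by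
  have e : (p × q) ≃ₗ[K] p.prod q :=
    (LinearEquiv.ofInjective (p.subtype.prodMap q.subtype)
      (p.injective_subtype.prodMap q.injective_subtype)).trans
      (LinearEquiv.ofEq _ _ (by rw [LinearMap.range_prodMap, p.range_subtype, q.range_subtype]))
  rw [← e.finrank_eq, Module.finrank_prod]

namespace Matrix

variable {K l m n o : Type*} [Field K] [Fintype l] [Fintype m] [Fintype n] [Fintype o]

theorem rank_fromBlocks_zero_zero (A : Matrix l m K) (D : Matrix n o K) :
    (fromBlocks A 0 0 D).rank = A.rank + D.rank := by
  let e := LinearEquiv.sumArrowLequivProdArrow m o K K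
  let e' := LinearEquiv.sumArrowLequivProdArrow l n K K
  have h : (fromBlocks A 0 0 D).mulVecLin =
      e'.symm.toLinearMap ∘ₗ A.mulVecLin.prodMap D.mulVecLin ∘ₗ e.toLinearMap := by
    ext x (i | i) <;>
      simp only [mulVecBilin_apply, fromBlocks_mulVec, zero_mulVec, add_zero, zero_add,
        Sum.elim_inl, Sum.elim_inr, LinearMap.coe_comp, LinearEquiv.coe_coe, Function.comp_apply,
        LinearMap.prodMap_apply, LinearEquiv.sumArrowLequivProdArrow_symm_apply_inl,
        LinearEquiv.sumArrowLequivProdArrow_symm_apply_inr, e, e'] <;>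
      rfl
  rw [rank, h, LinearMap.range_comp, LinearMap.range_comp_of_range_eq_top _ e.range,
    LinearEquiv.finrank_map_eq, LinearMap.range_prodMap, Submodule.finrank_prod]
  rfl

theorem rank_fromBlocks_of_invertible₁₁ [DecidableEq m]
    (A : Matrix m m K) (B : Matrix m n K) (C : Matrix n m K) (D : Matrix n n K) [Invertible A] :
    (fromBlocks A B C D).rank = Fintype.card m + (D - C * ⅟A * B).rank := by
  classical
  rw [fromBlocks_eq_of_invertible₁₁, rank_mul_eq_left_of_isUnit_det,
    rank_mul_eq_right_of_isUnit_det, rank_fromBlocks_zero_zero,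
    rank_of_isUnit A (isUnit_of_invertible A)]
  · simp
  · simp

end Matrix

theorem nullity_fromBlocks_of_invertible₁₁ {m n : Type} [Fintype m] [Fintype n] [DecidableEq m]
    (A : Matrix m m (ZMod 2)) (B : Matrix m n (ZMod 2)) (C : Matrix n m (ZMod 2))
    (D : Matrix n n (ZMod 2)) [Invertible A] :
    nullity (fromBlocks A B C D) = nullity (D - C * ⅟A * B) := by
  rw [nullity, nullity, rank_fromBlocks_of_invertible₁₁, Fintype.card_sum]
  omega

/-- for symmetric `M = [[1,𝟏,𝟎],[𝟏,A,B],[𝟎,Bᵀ,C]]` over GF(2)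
(first diagonal entry 1, first index adjacent to exactly the `α` block),
deleting the first row and column and complementing every entry of `A`
preserves the nullity. -/
theorem nullity_delete_complement {α β : Type} [Fintype α] [Fintype β]
    (M : Matrix (Unit ⊕ α ⊕ β) (Unit ⊕ α ⊕ β) (ZMod 2)) (hM : M.IsSymm)
    (h00 : M (Sum.inl ()) (Sum.inl ()) = 1)
    (h0a : ∀ a, M (Sum.inl ()) (Sum.inr (Sum.inl a)) = 1)
    (h0b : ∀ b, M (Sum.inl ()) (Sum.inr (Sum.inr b)) = 0)
    (M' : Matrix (α ⊕ β) (α ⊕ β) (ZMod 2))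
    (hAA : ∀ a a', M' (Sum.inl a) (Sum.inl a') =
      M (Sum.inr (Sum.inl a)) (Sum.inr (Sum.inl a')) + 1)
    (hAB : ∀ a b, M' (Sum.inl a) (Sum.inr b) = M (Sum.inr (Sum.inl a)) (Sum.inr (Sum.inr b)))
    (hBA : ∀ b a, M' (Sum.inr b) (Sum.inl a) = M (Sum.inr (Sum.inr b)) (Sum.inr (Sum.inl a)))
    (hBB : ∀ b b', M' (Sum.inr b) (Sum.inr b') = M (Sum.inr (Sum.inr b)) (Sum.inr (Sum.inr b'))) :
    nullity M = nullity M' := by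
  have hcorner : M.toBlocks₁₁ = 1 := by
    ext ⟨⟩ ⟨⟩
    exact h00
  have hcol (i : α ⊕ β) : M (Sum.inr i) (Sum.inl ()) = M (Sum.inl ()) (Sum.inr i) :=
    hM.apply _ _
  have hSchur : M' = M.toBlocks₂₂ - M.toBlocks₂₁ * M.toBlocks₁₂ := by
    ext (a | b) (a' | b') <;>
      simp [Matrix.mul_apply, toBlocks₂₂, toBlocks₂₁, toBlocks₁₂, hcol, h0a, h0b, hAA, hAB, hBA,
        hBB, CharTwo.sub_eq_add]
  let : Invertible (1 : Matrix Unit Unit (ZMod 2)) := invertibleOne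
  have h := nullity_fromBlocks_of_invertible₁₁ 1 M.toBlocks₁₂ M.toBlocks₂₁ M.toBlocks₂₂
  rwa [invOf_one, Matrix.mul_one, ← hSchur, ← hcorner, fromBlocks_toBlocks] at h
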